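/- A typical compact set of 𝒦 is locally rich: the set of E ∈ 𝒦 that are NOT locally rich (i.e. for which Tan(E,x) ≈ 𝒦 fails at some x ∈ E) is of first category (meagre) in the compact metric space (𝒦, d_H). -/

import Mathlib

open Metric Set Filter Topology

noncomputable section

/-- `d`-dimensional Euclidean space. -/
abbrev Euc (d : ℕ) := EuclideanSpace ℝ (Fin d)

/-- The cube `Q = [-1,1]^d`. -/
def cube (d : ℕ) : Set (Euc d) := {x | ∀ i, x i ∈ Set.Icc (-1 : ℝ) 1}

/-- `K ∈ 𝒦`: `K` is a nonempty compact subset of the cube `Q = [-1,1]^d`. -/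
def IsKSet (d : ℕ) (K : Set (Euc d)) : Prop :=
  K.Nonempty ∧ IsCompact K ∧ K ⊆ cube d

/-- The collection `𝒦` of nonempty compact subsets of `Q`. -/
def KColl (d : ℕ) : Set (Set (Euc d)) := {K | IsKSet d K}

/-- The zooming map `T_{x,t}(A) = {(y - x)/t : y ∈ A} ∩ Q`. -/
def zoom (d : ℕ) (x : Euc d) (t : ℝ) (A : Set (Euc d)) : Set (Euc d) :=
  ((fun y => t⁻¹ • (y - x)) '' A) ∩ cube d

/-- `F` is a tangent set of `A` at `x`: `F ∈ 𝒦` and `T_{x,t_n}(A) → F` in the Hausdorff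
distance for some sequence `t_n ↓ 0`. -/
def IsTangentSet (d : ℕ) (A : Set (Euc d)) (x : Euc d) (F : Set (Euc d)) : Prop :=
  IsKSet d F ∧ ∃ t : ℕ → ℝ, (∀ n, 0 < t n) ∧ StrictAnti t ∧ Tendsto t atTop (nhds 0) ∧
    Tendsto (fun n => hausdorffDist (zoom d x (t n) A) F) atTop (nhds 0)

/-- `Tan(A, x)`: the collection of all tangent sets of `A` at `x`. -/
def Tangents (d : ℕ) (A : Set (Euc d)) (x : Euc d) : Set (Set (Euc d)) :=
  {F | IsTangentSet d A x F}

/-- The relation `𝒜 ≲ ℬ`: there is `λ₀ > 0` such that every `A ∈ 𝒜` has, after a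
translation-and-rescaling with ratio `λ ∈ (λ₀, λ₀⁻¹)`, a matching set in `ℬ`:
`λ(A - a) = B - b` for some `B ∈ ℬ`, `a ∈ A`, `b ∈ B`. -/
def SubColl (d : ℕ) (𝒜 ℬ : Set (Set (Euc d))) : Prop :=
  ∃ lam0 : ℝ, 0 < lam0 ∧ ∀ A ∈ 𝒜, ∃ B ∈ ℬ, ∃ lam : ℝ, lam0 < lam ∧ lam < lam0⁻¹ ∧
    ∃ a ∈ A, ∃ b ∈ B, (fun y => lam • (y - a)) '' A = (fun y => y - b) '' B

/-- The equivalence `𝒜 ≈ ℬ`, i.e. `𝒜 ≲ ℬ` and `ℬ ≲ 𝒜`. -/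
def ApproxColl (d : ℕ) (𝒜 ℬ : Set (Set (Euc d))) : Prop :=
  SubColl d 𝒜 ℬ ∧ SubColl d ℬ 𝒜

/-- `E` is locally rich: `Tan(E,x) ≈ 𝒦` for every `x ∈ E`. -/
def LocallyRich (d : ℕ) (A : Set (Euc d)) : Prop :=
  ∀ x ∈ A, ApproxColl d (Tangents d A x) (KColl d)

/-- `𝒦₀`: the nonempty compact subsets of `Q` containing the origin. -/
def KColl0 (d : ℕ) : Set (Set (Euc d)) := {K | IsKSet d K ∧ (0 : Euc d) ∈ K}

/-- `𝒦₀⁺`: the nonempty compact subsets of `Q` containing the origin and contained in the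
half-space where the first coordinate is nonnegative. -/
def KColl0plus (d : ℕ) (hd : 0 < d) : Set (Set (Euc d)) :=
  {K | IsKSet d K ∧ (0 : Euc d) ∈ K ∧ ∀ x ∈ K, 0 ≤ x ⟨0, hd⟩}

section Aux
variable {d : ℕ}

lemma mem_cube {x : Euc d} : x ∈ cube d ↔ ∀ i, |x i| ≤ 1 := by
  simp [cube, abs_le]

lemma euc_norm_le (x : Euc d) {b : ℝ} (hb : 0 ≤ b) (h : ∀ i, |x i| ≤ b) :
    ‖x‖ ≤ Real.sqrt d * b := by
  rw [EuclideanSpace.norm_eq]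
  have h1 : ∑ i, ‖x i‖ ^ 2 ≤ ∑ _i : Fin d, b ^ 2 := by
    apply Finset.sum_le_sum
    intro i _
    rw [Real.norm_eq_abs]
    exact pow_le_pow_left₀ (abs_nonneg _) (h i) 2
  calc Real.sqrt (∑ i, ‖x i‖ ^ 2) ≤ Real.sqrt (d * b ^ 2) := by
        apply Real.sqrt_le_sqrt
        simpa using h1
    _ = Real.sqrt d * b := by
        rw [Real.sqrt_mul (by positivity), Real.sqrt_sq hb]

lemma abs_coord_le (x : Euc d) (i : Fin d) : |x i| ≤ ‖x‖ := by
  rw [EuclideanSpace.norm_eq]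
  have : |x i| = Real.sqrt (‖x i‖ ^ 2) := by
    rw [Real.sqrt_sq_eq_abs, Real.norm_eq_abs, abs_abs]
  rw [this]
  apply Real.sqrt_le_sqrt
  exact Finset.single_le_sum (f := fun j => ‖x j‖ ^ 2) (fun j _ => by positivity)
    (Finset.mem_univ i)

lemma abs_coord_sub_le (x y : Euc d) (i : Fin d) : |x i - y i| ≤ dist x y := by
  have h := abs_coord_le (x - y) i
  rw [PiLp.sub_apply] at h
  rwa [dist_eq_norm]

lemma cube_isCompact : IsCompact (cube d) := by
  have hclosed : IsClosed (cube d) := by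
    have : cube d = ⋂ i : Fin d, (fun x : Euc d => x i) ⁻¹' (Set.Icc (-1 : ℝ) 1) := by
      ext x; simp [cube]
    rw [this]
    exact isClosed_iInter fun i =>
      IsClosed.preimage (EuclideanSpace.proj (𝕜 := ℝ) i).continuous isClosed_Icc
  have hbdd : Bornology.IsBounded (cube d) := by
    apply Bornology.IsBounded.subset (Metric.isBounded_closedBall (x := (0 : Euc d))
      (r := Real.sqrt d))
    intro x hx
    simp only [Metric.mem_closedBall, dist_zero_right]
    simpa using euc_norm_le x zero_le_one (mem_cube.1 hx)
  exact Metric.isCompact_of_isClosed_isBounded hclosed hbdd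

lemma zero_mem_cube : (0 : Euc d) ∈ cube d := by
  intro i; simp

/-! ### rounding to a grid -/

def rnd (d : ℕ) (s : ℝ) (y : Euc d) : Euc d :=
  (WithLp.equiv 2 (Fin d → ℝ)).symm (fun i => s * round (y i / s))

lemma rnd_apply (s : ℝ) (y : Euc d) (i : Fin d) : rnd d s y i = s * round (y i / s) :=
  rfl

lemma rnd_coord_close {s : ℝ} (hs : 0 < s) (y : Euc d) (i : Fin d) :
    |rnd d s y i - y i| ≤ s / 2 := by
  rw [rnd_apply]
  have hyi : s * (y i / s) = y i := by field_simp
  calc |s * round (y i / s) - y i| = |s * (round (y i / s) - y i / s)| := by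
        rw [mul_sub, hyi]
    _ = s * |(round (y i / s) : ℝ) - y i / s| := by
        rw [abs_mul, abs_of_pos hs]
    _ ≤ s * (1 / 2) := by
        apply mul_le_mul_of_nonneg_left _ hs.le
        rw [abs_sub_comm]
        exact abs_sub_round _
    _ = s / 2 := by ring

lemma rnd_sep {s : ℝ} (hs : 0 < s) {a b : Euc d} (h : rnd d s a ≠ rnd d s b) :
    ∃ i, s ≤ |rnd d s a i - rnd d s b i| := by
  have h2 : (fun i => s * round (a i / s)) ≠ (fun i => s * round (b i / s)) := by
    intro heq
    exact h (by rw [rnd, rnd, heq])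
  obtain ⟨i, hi⟩ := Function.ne_iff.1 h2
  refine ⟨i, ?_⟩
  rw [rnd_apply, rnd_apply]
  have hround : round (a i / s) ≠ round (b i / s) := by
    intro heq; exact hi (by rw [heq])
  have h1 : (1 : ℝ) ≤ |(round (a i / s) : ℝ) - (round (b i / s) : ℝ)| := by
    have hz : (1 : ℤ) ≤ |round (a i / s) - round (b i / s)| :=
      Int.one_le_abs (sub_ne_zero.2 hround)
    have hz' : ((1 : ℤ) : ℝ) ≤ ((|round (a i / s) - round (b i / s)| : ℤ) : ℝ) :=
      Int.cast_le.2 hz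
    push_cast at hz'
    exact hz'
  calc s = s * 1 := by ring
    _ ≤ s * |(round (a i / s) : ℝ) - (round (b i / s) : ℝ)| :=
        mul_le_mul_of_nonneg_left h1 hs.le
    _ = |s * round (a i / s) - s * round (b i / s)| := by
        rw [← mul_sub, abs_mul, abs_of_pos hs]

/-! ### the model family 𝒟 -/

def Dset (d : ℕ) (hd : 0 < d) : Set (Euc d) :=
  {x | 0 ≤ x ⟨0, hd⟩ ∧ ∀ i, |x i| ≤ 4⁻¹}

def Dcoll (d : ℕ) (hd : 0 < d) : Set (Set (Euc d)) :=
  {C | C.Nonempty ∧ IsCompact C ∧ (0 : Euc d) ∈ C ∧ C ⊆ Dset d hd}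

lemma zero_mem_Dset (hd : 0 < d) : (0 : Euc d) ∈ Dset d hd := by
  constructor
  · simp
  · intro i; simp

lemma Dset_subset_cube (hd : 0 < d) : Dset d hd ⊆ cube d := by
  intro x hx
  rw [mem_cube]
  intro i
  exact (hx.2 i).trans (by norm_num)

/-! ### the density construction -/

set_option maxHeartbeats 2000000 in
lemma density_key (hd : 0 < d) {C : Set (Euc d)} (hC : C ∈ Dcoll d hd) (m : ℕ)
    {E : Set (Euc d)} (hE : IsKSet d E) {δ : ℝ} (hδ : 0 < δ) :
    ∃ E' : Set (Euc d), IsKSet d E' ∧ hausdorffDist E' E < δ ∧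
      ∃ ε t : ℝ, 0 < ε ∧ 0 < t ∧ t < ((m : ℝ)+1)⁻¹ ∧
        ∀ E'' : Set (Euc d), IsKSet d E'' → hausdorffDist E'' E' < ε →
          ∀ x ∈ E'', ∃ c ∈ C, hausdorffDist (zoom d x t E'') ((fun y => y - c) '' C)
            < ((m : ℝ)+1)⁻¹ := by
  obtain ⟨hCne, hCcomp, hC0, hCD⟩ := hC
  obtain ⟨hEne, hEcomp, hEcube⟩ := hE
  have hd1 : (1 : ℝ) ≤ Real.sqrt d := by
    rw [show (1 : ℝ) = Real.sqrt 1 by simp]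
    apply Real.sqrt_le_sqrt
    exact_mod_cast hd
  set κ := Real.sqrt d with hκdef
  have hκ : 0 < κ := lt_of_lt_of_le one_pos hd1
  have hm : (0 : ℝ) < (m + 1 : ℝ)⁻¹ := by positivity
  set t := min ((2 * ((m : ℝ) + 1))⁻¹) (min (1/8) (δ / (12 * κ + 1))) with ht_def
  have ht0 : 0 < t := by
    apply lt_min (by positivity) (lt_min (by norm_num) (by positivity))
  have ht_m : t < ((m : ℝ) + 1)⁻¹ := by
    apply lt_of_le_of_lt (min_le_left _ _)
    rw [inv_lt_inv₀ (by positivity) (by positivity)]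
    linarith
  have ht8 : t ≤ 1/8 := le_trans (min_le_right _ _) (min_le_left _ _)
  have htδ : 12 * κ * t < δ := by
    have ht' : t ≤ δ / (12 * κ + 1) := le_trans (min_le_right _ _) (min_le_right _ _)
    have h2 : t * (12 * κ + 1) ≤ δ := (le_div_iff₀ (by positivity)).1 ht'
    nlinarith
  set s := 4 * t with hs_def
  have hs0 : 0 < s := by positivity
  have hs12 : s ≤ 1/2 := by rw [hs_def]; linarith
  have hCcoord : ∀ c ∈ C, ∀ i, |c i| ≤ 4⁻¹ := fun c hc i => (hCD hc).2 i
  -- the shrunk copy of E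
  set K := (fun y : Euc d => (1 - 2*s) • y) '' E with hK_def
  have hKcomp : IsCompact K := hEcomp.image (continuous_const_smul _)
  have hKcoord : ∀ q ∈ K, ∀ i, |q i| ≤ 1 - 2*s := by
    rintro q ⟨y, hy, rfl⟩ i
    show |((1 - 2*s) • y) i| ≤ 1 - 2*s
    rw [PiLp.smul_apply, smul_eq_mul, abs_mul, abs_of_nonneg (by linarith : (0:ℝ) ≤ 1 - 2*s)]
    calc (1 - 2*s) * |y i| ≤ (1 - 2*s) * 1 :=
          mul_le_mul_of_nonneg_left (mem_cube.1 (hEcube hy) i) (by linarith)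
      _ = 1 - 2*s := by ring
  obtain ⟨N, hNK, hNfin, hNcov⟩ := hKcomp.finite_cover_balls (half_pos hs0)
  set P := rnd d s '' N with hP_def
  have hPfin : P.Finite := (hNfin.image _)
  set E' := ⋃ p ∈ P, (fun c => p + t • c) '' C with hE'_def
  have hmemE' : ∀ z, z ∈ E' ↔ ∃ p ∈ P, ∃ c ∈ C, z = p + t • c := by
    intro z
    simp only [hE'_def, mem_iUnion, mem_image, exists_prop]
    constructor
    · rintro ⟨p, hp, c, hc, h⟩; exact ⟨p, hp, c, hc, h.symm⟩
    · rintro ⟨p, hp, c, hc, h⟩; exact ⟨p, hp, c, hc, h.symm⟩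
  have hP_sub_E' : ∀ p ∈ P, p ∈ E' := by
    intro p hp
    rw [hmemE']
    exact ⟨p, hp, 0, hC0, by simp⟩
  have hE'comp : IsCompact E' := by
    apply hPfin.isCompact_biUnion
    intro p _
    exact hCcomp.image (by fun_prop)
  have hPcoord : ∀ p ∈ P, ∀ i, |p i| ≤ 1 - 2*s + s/2 := by
    rintro p ⟨q, hq, rfl⟩ i
    calc |rnd d s q i| ≤ |rnd d s q i - q i| + |q i| := by
          have := abs_add_le (rnd d s q i - q i) (q i); simpa using this
      _ ≤ s/2 + (1 - 2*s) := add_le_add (rnd_coord_close hs0 q i) (hKcoord q (hNK hq) i)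
      _ = 1 - 2*s + s/2 := by ring
  have hE'cube : E' ⊆ cube d := by
    intro z hz
    obtain ⟨p, hp, c, hc, rfl⟩ := (hmemE' z).1 hz
    rw [mem_cube]
    intro i
    have h1 : (p + t • c) i = p i + t * c i := rfl
    rw [h1]
    have h2 := hPcoord p hp i
    have h3 := hCcoord c hc i
    have : |p i + t * c i| ≤ |p i| + t * |c i| := by
      calc |p i + t * c i| ≤ |p i| + |t * c i| := abs_add_le _ _
        _ = |p i| + t * |c i| := by rw [abs_mul, abs_of_pos ht0]
    have h4 : t * |c i| ≤ t * 4⁻¹ := mul_le_mul_of_nonneg_left h3 ht0.le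
    have hst : t ≤ s := by rw [hs_def]; linarith
    linarith
  have hE'ne : E'.Nonempty := by
    obtain ⟨y0, hy0⟩ := hEne
    have hq : (1 - 2*s) • y0 ∈ K := mem_image_of_mem _ hy0
    have := hNcov hq
    simp only [mem_iUnion, exists_prop] at this
    obtain ⟨q', hq'N, _⟩ := this
    exact ⟨rnd d s q', hP_sub_E' _ (mem_image_of_mem _ hq'N)⟩
  -- Hausdorff distance to E
  have hEdist : hausdorffDist E' E ≤ 3 * κ * s := by
    apply hausdorffDist_le_of_mem_dist (by positivity)
    · intro z hz
      obtain ⟨p, hp, c, hc, rfl⟩ := (hmemE' z).1 hz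
      obtain ⟨q, hqN, rfl⟩ := hp
      obtain ⟨y, hyE, rfl⟩ := hNK hqN
      refine ⟨y, hyE, ?_⟩
      set q := (1 - 2*s) • y
      have d1 : dist (rnd d s q + t • c) (rnd d s q) ≤ t * (κ * 4⁻¹) := by
        rw [dist_eq_norm, add_sub_cancel_left, norm_smul, Real.norm_eq_abs, abs_of_pos ht0]
        exact mul_le_mul_of_nonneg_left
          (euc_norm_le c (by norm_num) (hCcoord c hc)) ht0.le
      have d2 : dist (rnd d s q) q ≤ κ * (s/2) := by
        rw [dist_eq_norm]
        apply euc_norm_le _ (by positivity)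
        intro i
        rw [PiLp.sub_apply]
        exact rnd_coord_close hs0 q i
      have d3 : dist q y ≤ 2 * s * κ := by
        have : q - y = (-(2*s)) • y := by
          show (1 - 2*s) • y - y = _
          rw [sub_smul, one_smul, neg_smul]
          abel
        rw [dist_eq_norm, this, norm_smul, Real.norm_eq_abs, abs_neg,
          abs_of_pos (by positivity : (0:ℝ) < 2*s)]
        have : ‖y‖ ≤ κ * 1 := euc_norm_le y zero_le_one (mem_cube.1 (hEcube hyE))
        nlinarith
      calc dist (rnd d s q + t • c) y
          ≤ dist (rnd d s q + t • c) (rnd d s q) + dist (rnd d s q) q + dist q y :=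
            dist_triangle4 _ _ _ _
        _ ≤ t * (κ * 4⁻¹) + κ * (s/2) + 2 * s * κ := by linarith
        _ ≤ 3 * κ * s := by
            have hts : t ≤ s := by rw [hs_def]; linarith
            nlinarith
    · intro y hyE
      have hq : (1 - 2*s) • y ∈ K := mem_image_of_mem _ hyE
      have := hNcov hq
      simp only [mem_iUnion, exists_prop] at this
      obtain ⟨q', hq'N, hq'ball⟩ := this
      refine ⟨rnd d s q', hP_sub_E' _ (mem_image_of_mem _ hq'N), ?_⟩
      have d1 : dist y ((1 - 2*s) • y) ≤ 2 * s * κ := by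
        have : y - (1 - 2*s) • y = (2*s) • y := by
          rw [sub_smul, one_smul]; abel
        rw [dist_eq_norm, this, norm_smul, Real.norm_eq_abs,
          abs_of_pos (by positivity : (0:ℝ) < 2*s)]
        have : ‖y‖ ≤ κ * 1 := euc_norm_le y zero_le_one (mem_cube.1 (hEcube hyE))
        nlinarith
      have d2 : dist ((1 - 2*s) • y) q' ≤ s / 2 := le_of_lt (mem_ball.1 hq'ball)
      have d3 : dist q' (rnd d s q') ≤ κ * (s/2) := by
        rw [dist_eq_norm]
        apply euc_norm_le _ (by positivity)
        intro i
        rw [PiLp.sub_apply, abs_sub_comm]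
        exact rnd_coord_close hs0 q' i
      calc dist y (rnd d s q')
          ≤ dist y ((1 - 2*s) • y) + dist ((1 - 2*s) • y) q' + dist q' (rnd d s q') :=
            dist_triangle4 _ _ _ _
        _ ≤ 2 * s * κ + s/2 + κ * (s/2) := by linarith
        _ ≤ 3 * κ * s := by nlinarith
  have hEdistlt : hausdorffDist E' E < δ := by
    apply lt_of_le_of_lt hEdist
    calc 3 * κ * s = 12 * κ * t := by rw [hs_def]; ring
      _ < δ := htδ
  -- the stability estimate
  refine ⟨E', ⟨hE'ne, hE'comp, hE'cube⟩, hEdistlt, t / (4 * ((m:ℝ) + 1)), t,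
    by positivity, ht0, ht_m, ?_⟩
  intro E'' hE'' hdist x hx
  set ε := t / (4 * ((m:ℝ) + 1)) with hε_def
  have hε0 : 0 < ε := by positivity
  have hr_eq : 2 * ε / t = (2 * ((m:ℝ) + 1))⁻¹ := by
    rw [hε_def]; field_simp; ring
  set r := (2 * ((m:ℝ) + 1))⁻¹ with hr_def
  have hr0 : 0 < r := by positivity
  have hr12 : r ≤ 1/2 := by
    rw [hr_def]
    rw [show (1:ℝ)/2 = (2:ℝ)⁻¹ by norm_num]
    apply inv_anti₀ (by norm_num)
    have : (0:ℝ) ≤ (m:ℝ) := Nat.cast_nonneg m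
    linarith
  have hfin : EMetric.hausdorffEdist E'' E' ≠ ⊤ :=
    Metric.hausdorffEdist_ne_top_of_nonempty_of_bounded hE''.1 hE'ne
      hE''.2.1.isBounded hE'comp.isBounded
  obtain ⟨x', hx'E', hxx'⟩ := exists_dist_lt_of_hausdorffDist_lt hx hdist hfin
  obtain ⟨p, hpP, c, hcC, hx'eq⟩ := (hmemE' x').1 hx'E'
  refine ⟨c, hcC, ?_⟩
  have key1 : ∀ (y y' : Euc d), dist y y' < ε →
      dist (t⁻¹ • (y - x)) (t⁻¹ • (y' - x')) ≤ r := by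
    intro y y' hyy'
    rw [dist_smul₀, Real.norm_eq_abs, abs_of_pos (by positivity : (0:ℝ) < t⁻¹)]
    have h1 : dist (y - x) (y' - x') ≤ dist y y' + dist x x' := dist_sub_sub_le _ _ _ _
    have h2 : dist (y - x) (y' - x') ≤ 2 * ε := by
      have := hxx'.le; have := hyy'.le; linarith
    calc t⁻¹ * dist (y - x) (y' - x') ≤ t⁻¹ * (2 * ε) :=
          mul_le_mul_of_nonneg_left h2 (by positivity)
      _ = 2 * ε / t := by ring
      _ = r := hr_eq
  have hmain : hausdorffDist (zoom d x t E'') ((fun y => y - c) '' C) ≤ r := by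
    apply hausdorffDist_le_of_mem_dist hr0.le
    · rintro z ⟨⟨y, hyE'', rfl⟩, hzcube⟩
      obtain ⟨y', hy'E', hyy'⟩ := exists_dist_lt_of_hausdorffDist_lt hyE'' hdist hfin
      obtain ⟨q, hqP, c', hc'C, hy'eq⟩ := (hmemE' y').1 hy'E'
      have hdzz : dist (t⁻¹ • (y - x)) (t⁻¹ • (y' - x')) ≤ r := key1 y y' hyy'
      by_cases hpq : q = p
      · refine ⟨c' - c, mem_image_of_mem _ hc'C, ?_⟩
        have : t⁻¹ • (y' - x') = c' - c := by
          rw [hy'eq, hx'eq, hpq]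
          rw [show p + t • c' - (p + t • c) = t • (c' - c) by rw [smul_sub]; abel]
          rw [smul_smul, inv_mul_cancel₀ (ne_of_gt ht0), one_smul]
        rw [this] at hdzz
        show dist (t⁻¹ • (y - x)) ((fun y => y - c) c') ≤ r
        exact hdzz
      · exfalso
        obtain ⟨a, haN, ha⟩ := hqP
        obtain ⟨b, hbN, hb⟩ := hpP
        have hsepex : ∃ i, s ≤ |q i - p i| := by
          have : rnd d s a ≠ rnd d s b := by rw [ha, hb]; exact hpq
          obtain ⟨i, hi⟩ := rnd_sep hs0 this
          exact ⟨i, by rwa [ha, hb] at hi⟩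
        obtain ⟨i, hsep⟩ := hsepex
        -- coordinates of the zoomed points
        set z := t⁻¹ • (y - x) with hz_def
        set z' := t⁻¹ • (y' - x') with hz'_def
        have hz'i : z' i = t⁻¹ * ((q i - p i) + t * (c' i - c i)) := by
          rw [hz'_def, hy'eq, hx'eq]
          show t⁻¹ * ((q + t • c') i - (p + t • c) i) = _
          have e1 : (q + t • c') i = q i + t * c' i := rfl
          have e2 : (p + t • c) i = p i + t * c i := rfl
          rw [e1, e2]; ring_nf
        have hzi : |z i| ≤ 1 := mem_cube.1 hzcube i
        have hzz'i : |z i - z' i| ≤ r := le_trans (abs_coord_sub_le z z' i) hdzz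
        have hc'ci : |c' i - c i| ≤ 1/2 := by
          have := hCcoord c hcC i
          have := hCcoord c' hc'C i
          calc |c' i - c i| ≤ |c' i| + |c i| := abs_sub _ _
            _ ≤ 4⁻¹ + 4⁻¹ := by linarith
            _ = 1/2 := by norm_num
        have habs : |(q i - p i) + t * (c' i - c i)| ≥ s - t * (1/2) := by
          have h1 : |q i - p i| ≤ |(q i - p i) + t * (c' i - c i)| + |t * (c' i - c i)| := by
            have := abs_add_le ((q i - p i) + t * (c' i - c i)) (-(t * (c' i - c i)))
            simpa using this
          have h2 : |t * (c' i - c i)| ≤ t * (1/2) := by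
            rw [abs_mul, abs_of_pos ht0]
            exact mul_le_mul_of_nonneg_left hc'ci ht0.le
          linarith
        have hz'big : |z' i| ≥ 7/2 := by
          rw [hz'i, abs_mul, abs_of_pos (by positivity : (0:ℝ) < t⁻¹)]
          have : t⁻¹ * (s - t * (1/2)) ≤ t⁻¹ * |(q i - p i) + t * (c' i - c i)| :=
            mul_le_mul_of_nonneg_left habs (by positivity)
          have heq : t⁻¹ * (s - t * (1/2)) = 4 - 1/2 := by
            rw [hs_def]; field_simp
          linarith [heq ▸ this]
        have h5 : |z' i| ≤ |z' i - z i| + |z i| := by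
          have := abs_add_le (z' i - z i) (z i); simpa using this
        have h6 : |z' i - z i| = |z i - z' i| := abs_sub_comm _ _
        linarith
    · rintro w ⟨c', hc'C, rfl⟩
      have hy'E' : p + t • c' ∈ E' := (hmemE' _).2 ⟨p, hpP, c', hc'C, rfl⟩
      obtain ⟨y, hyE'', hyy'⟩ := exists_dist_lt_of_hausdorffDist_lt' hy'E' hdist hfin
      have hweq : (fun y => y - c) c' = t⁻¹ • ((p + t • c') - x') := by
        rw [hx'eq]
        show c' - c = t⁻¹ • (p + t • c' - (p + t • c))
        rw [show p + t • c' - (p + t • c) = t • (c' - c) by rw [smul_sub]; abel]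
        rw [smul_smul, inv_mul_cancel₀ (ne_of_gt ht0), one_smul]
      have hdist2 : dist (t⁻¹ • (y - x)) ((fun y => y - c) c') ≤ r := by
        rw [hweq]
        exact key1 y (p + t • c') hyy'
      refine ⟨t⁻¹ • (y - x), ⟨mem_image_of_mem _ hyE'', ?_⟩, by rw [dist_comm]; exact hdist2⟩
      rw [mem_cube]
      intro i
      have h1 : |(t⁻¹ • (y - x)) i - ((fun y => y - c) c') i| ≤ r :=
        le_trans (abs_coord_sub_le (t⁻¹ • (y - x)) ((fun y => y - c) c') i) hdist2
      have h2 : |((fun y => y - c) c') i| ≤ 1/2 := by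
        show |(c' - c) i| ≤ 1/2
        rw [PiLp.sub_apply]
        have := hCcoord c hcC i
        have := hCcoord c' hc'C i
        calc |c' i - c i| ≤ |c' i| + |c i| := abs_sub _ _
          _ ≤ 4⁻¹ + 4⁻¹ := by linarith
          _ = 1/2 := by norm_num
      calc |(t⁻¹ • (y - x)) i|
          ≤ |((fun y => y - c) c') i| + |(t⁻¹ • (y - x)) i - ((fun y => y - c) c') i| := by
            have := abs_add_le (((fun y => y - c) c') i)
              ((t⁻¹ • (y - x)) i - ((fun y => y - c) c') i)
            simpa using this
        _ ≤ 1/2 + r := add_le_add h2 h1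
        _ ≤ 1 := by linarith
  apply lt_of_le_of_lt hmain
  rw [hr_def]
  rw [inv_lt_inv₀ (by positivity) (by positivity)]
  have : (0:ℝ) ≤ (m:ℝ) := Nat.cast_nonneg m
  linarith


lemma sub_image_subset_cube {hd : 0 < d} {C : Set (Euc d)} (hC : C ⊆ Dset d hd)
    {c : Euc d} (hc : c ∈ Dset d hd) : (fun y => y - c) '' C ⊆ cube d := by
  rintro w ⟨u, hu, rfl⟩
  rw [mem_cube]
  intro i
  have h1 : |u i| ≤ 4⁻¹ := (hC hu).2 i
  have h2 : |c i| ≤ 4⁻¹ := hc.2 i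
  show |u i - c i| ≤ 1
  calc |u i - c i| ≤ |u i| + |c i| := abs_sub _ _
    _ ≤ 1 := by linarith

lemma zoom_nonempty {x : Euc d} {t : ℝ} {A : Set (Euc d)} (hx : x ∈ A) :
    (zoom d x t A).Nonempty :=
  ⟨0, ⟨x, hx, by simp⟩, zero_mem_cube⟩

lemma zoom_bounded {x : Euc d} {t : ℝ} {A : Set (Euc d)} :
    Bornology.IsBounded (zoom d x t A) :=
  cube_isCompact.isBounded.subset (inter_subset_right)

lemma isometry_sub_const (c : Euc d) : Isometry (fun y : Euc d => y - c) :=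
  Isometry.of_dist_eq fun a b => dist_sub_right a b c

lemma hausdorffDist_sub_const_le {C : Set (Euc d)} (hCne : C.Nonempty) (c c' : Euc d) :
    hausdorffDist ((fun y => y - c) '' C) ((fun y => y - c') '' C) ≤ dist c c' := by
  apply hausdorffDist_le_of_mem_dist dist_nonneg
  · rintro w ⟨u, hu, rfl⟩
    exact ⟨u - c', mem_image_of_mem _ hu, by rw [dist_sub_left]⟩
  · rintro w ⟨u, hu, rfl⟩
    exact ⟨u - c, mem_image_of_mem _ hu, by rw [dist_sub_left, dist_comm]⟩

lemma exists_strictAnti_subseq {u : ℕ → ℝ} (hpos : ∀ n, 0 < u n)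
    (h0 : Tendsto u atTop (nhds 0)) : ∃ ψ : ℕ → ℕ, StrictMono ψ ∧ StrictAnti (u ∘ ψ) := by
  have key : ∀ k : ℕ, ∃ n, k < n ∧ u n < u k := by
    intro k
    have h1 : ∀ᶠ n in atTop, u n < u k := h0.eventually (gt_mem_nhds (hpos k))
    have h2 : ∀ᶠ n in atTop, k < n := eventually_gt_atTop k
    exact (h2.and h1).exists
  choose next hnext1 hnext2 using key
  refine ⟨fun n => next^[n] 0, ?_, ?_⟩
  · apply strictMono_nat_of_lt_succ
    intro n
    rw [Function.iterate_succ_apply']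
    exact hnext1 _
  · apply strictAnti_nat_of_succ_lt
    intro n
    show u (next^[n+1] 0) < u (next^[n] 0)
    rw [Function.iterate_succ_apply']
    exact hnext2 _

lemma inv_nat_succ_tendsto : Tendsto (fun n : ℕ => ((n : ℝ) + 1)⁻¹) atTop (nhds 0) := by
  have : Tendsto (fun n : ℕ => 1 / ((n : ℝ) + 1)) atTop (nhds 0) :=
    tendsto_one_div_add_atTop_nhds_zero_nat
  simpa [one_div] using this

lemma tangent_limit (hd : 0 < d) {E : Set (Euc d)} (hE : IsKSet d E) {x : Euc d} (hx : x ∈ E)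
    {C : Set (Euc d)} (hC : C ∈ Dcoll d hd)
    (H : ∀ j : ℕ, ∃ C' ∈ Dcoll d hd, hausdorffDist C' C < ((j : ℝ) + 1)⁻¹ ∧
      ∃ t : ℝ, 0 < t ∧ t < ((j : ℝ) + 1)⁻¹ ∧ ∃ c ∈ C',
        hausdorffDist (zoom d x t E) ((fun y => y - c) '' C') < ((j : ℝ) + 1)⁻¹) :
    ∃ b ∈ C, IsTangentSet d E x ((fun y => y - b) '' C) := by
  obtain ⟨hCne, hCcomp, hC0, hCD⟩ := hC
  choose C' hC'D hC'close t ht0 htlt c hcC' hz using H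
  -- approximate centers in C
  have Hc2 : ∀ j, ∃ b ∈ C, dist (c j) b < ((j : ℝ) + 1)⁻¹ := by
    intro j
    have hfin : EMetric.hausdorffEdist (C' j) C ≠ ⊤ :=
      Metric.hausdorffEdist_ne_top_of_nonempty_of_bounded (hC'D j).1 hCne
        (hC'D j).2.1.isBounded hCcomp.isBounded
    exact exists_dist_lt_of_hausdorffDist_lt (hcC' j) (hC'close j) hfin
  choose c2 hc2C hc2d using Hc2
  -- uniform bound
  have hkey : ∀ j, hausdorffDist (zoom d x (t j) E) ((fun y => y - c2 j) '' C)
      < 3 * ((j : ℝ) + 1)⁻¹ := by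
    intro j
    have hj : (0 : ℝ) < ((j : ℝ) + 1)⁻¹ := by positivity
    set Z := zoom d x (t j) E
    set A := (fun y => y - c j) '' (C' j) with hA
    set B1 := (fun y => y - c j) '' C with hB1
    set B2 := (fun y => y - c2 j) '' C with hB2
    have hZne : Z.Nonempty := zoom_nonempty hx
    have hAne : A.Nonempty := (hC'D j).1.image _
    have hB1ne : B1.Nonempty := hCne.image _
    have hB2ne : B2.Nonempty := hCne.image _
    have hZbd : Bornology.IsBounded Z := zoom_bounded
    have hAbd : Bornology.IsBounded A :=
      cube_isCompact.isBounded.subset (sub_image_subset_cube (hC'D j).2.2.2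
        ((hC'D j).2.2.2 (hcC' j)))
    have hB1bd : Bornology.IsBounded B1 :=
      cube_isCompact.isBounded.subset (sub_image_subset_cube hCD ((hC'D j).2.2.2 (hcC' j)))
    have hB2bd : Bornology.IsBounded B2 :=
      cube_isCompact.isBounded.subset (sub_image_subset_cube hCD (hCD (hc2C j)))
    have hZA : hausdorffDist Z A < ((j : ℝ) + 1)⁻¹ := hz j
    have hAB1 : hausdorffDist A B1 < ((j : ℝ) + 1)⁻¹ := by
      rw [hA, hB1, hausdorffDist_image (isometry_sub_const (c j))]
      exact hC'close j
    have hB1B2 : hausdorffDist B1 B2 < ((j : ℝ) + 1)⁻¹ :=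
      lt_of_le_of_lt (hausdorffDist_sub_const_le hCne _ _) (hc2d j)
    have finZA : EMetric.hausdorffEdist Z A ≠ ⊤ :=
      Metric.hausdorffEdist_ne_top_of_nonempty_of_bounded hZne hAne hZbd hAbd
    have finAB1 : EMetric.hausdorffEdist A B1 ≠ ⊤ :=
      Metric.hausdorffEdist_ne_top_of_nonempty_of_bounded hAne hB1ne hAbd hB1bd
    calc hausdorffDist Z B2 ≤ hausdorffDist Z A + hausdorffDist A B2 :=
          hausdorffDist_triangle finZA
      _ ≤ hausdorffDist Z A + (hausdorffDist A B1 + hausdorffDist B1 B2) := by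
          have := hausdorffDist_triangle (s := A) (u := B2) finAB1
          linarith
      _ < 3 * ((j : ℝ) + 1)⁻¹ := by linarith
  -- extract converging subsequence of centers
  obtain ⟨b, hbC, φ, hφ, hφconv⟩ := hCcomp.tendsto_subseq hc2C
  refine ⟨b, hbC, ?_⟩
  set F := (fun y => y - b) '' C with hF
  have hFbd : Bornology.IsBounded F :=
    cube_isCompact.isBounded.subset (sub_image_subset_cube hCD (hCD hbC))
  have hFne : F.Nonempty := hCne.image _
  have hFK : IsKSet d F :=
    ⟨hFne, hCcomp.image ((continuous_id.sub continuous_const)), sub_image_subset_cube hCD (hCD hbC)⟩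
  -- hausdorff convergence along φ
  have hg : ∀ j, hausdorffDist (zoom d x (t (φ j)) E) F
      ≤ 3 * ((φ j : ℝ) + 1)⁻¹ + dist (c2 (φ j)) b := by
    intro j
    have hZne : (zoom d x (t (φ j)) E).Nonempty := zoom_nonempty hx
    have hB2ne : ((fun y => y - c2 (φ j)) '' C).Nonempty := hCne.image _
    have hB2bd : Bornology.IsBounded ((fun y => y - c2 (φ j)) '' C) :=
      cube_isCompact.isBounded.subset (sub_image_subset_cube hCD (hCD (hc2C (φ j))))
    have fin1 : EMetric.hausdorffEdist (zoom d x (t (φ j)) E) ((fun y => y - c2 (φ j)) '' C) ≠ ⊤ :=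
      Metric.hausdorffEdist_ne_top_of_nonempty_of_bounded hZne hB2ne zoom_bounded hB2bd
    calc hausdorffDist (zoom d x (t (φ j)) E) F
        ≤ hausdorffDist (zoom d x (t (φ j)) E) ((fun y => y - c2 (φ j)) '' C)
          + hausdorffDist ((fun y => y - c2 (φ j)) '' C) F :=
          hausdorffDist_triangle fin1
      _ ≤ 3 * ((φ j : ℝ) + 1)⁻¹ + dist (c2 (φ j)) b :=
          add_le_add (hkey (φ j)).le (hausdorffDist_sub_const_le hCne _ _)
  have hgto : Tendsto (fun j => 3 * ((φ j : ℝ) + 1)⁻¹ + dist (c2 (φ j)) b) atTop (nhds 0) := by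
    have h1 : Tendsto (fun j => 3 * ((φ j : ℝ) + 1)⁻¹) atTop (nhds 0) := by
      have base : Tendsto (fun n : ℕ => 3 * ((n : ℝ) + 1)⁻¹) atTop (nhds 0) := by
        have := inv_nat_succ_tendsto.const_mul (3 : ℝ)
        simpa using this
      exact base.comp hφ.tendsto_atTop
    have h2 : Tendsto (fun j => dist (c2 (φ j)) b) atTop (nhds 0) :=
      tendsto_iff_dist_tendsto_zero.1 hφconv
    simpa using h1.add h2
  have hDconv : Tendsto (fun j => hausdorffDist (zoom d x (t (φ j)) E) F) atTop (nhds 0) :=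
    squeeze_zero (fun j => hausdorffDist_nonneg) hg hgto
  -- decreasing subsequence of scales
  have hupos : ∀ j, 0 < t (φ j) := fun j => ht0 (φ j)
  have huto : Tendsto (fun j => t (φ j)) atTop (nhds 0) := by
    refine squeeze_zero (fun j => (hupos j).le) (fun j => ?_) inv_nat_succ_tendsto
    have h1 : t (φ j) < ((φ j : ℝ) + 1)⁻¹ := htlt (φ j)
    have h2 : ((φ j : ℝ) + 1)⁻¹ ≤ ((j : ℝ) + 1)⁻¹ := by
      apply inv_anti₀ (by positivity)
      have : (j : ℝ) ≤ (φ j : ℝ) := by exact_mod_cast hφ.le_apply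
      linarith
    linarith
  obtain ⟨ψ, hψ, hψanti⟩ := exists_strictAnti_subseq hupos huto
  refine ⟨hFK, fun n => t (φ (ψ n)), fun n => ht0 _, hψanti, ?_, ?_⟩
  · exact huto.comp hψ.tendsto_atTop
  · exact hDconv.comp hψ.tendsto_atTop




/-! ### countable dense family in `Dcoll` -/

lemma exists_dense_family (hd : 0 < d) : ∃ Cand : Finset ℕ → Set (Euc d),
    (∀ F, Cand F ∈ Dcoll d hd) ∧
    ∀ C ∈ Dcoll d hd, ∀ ε > 0, ∃ F, hausdorffDist (Cand F) C < ε := by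
  classical
  obtain ⟨u, hucount, hudense⟩ := TopologicalSpace.exists_countable_dense ↥(Dset d hd)
  set S : Set (Euc d) := insert (0 : Euc d) (Subtype.val '' u) with hS
  have hScount : S.Countable := (hucount.image _).insert _
  have hSsub : S ⊆ Dset d hd := by
    rw [hS]
    apply insert_subset (zero_mem_Dset hd)
    rintro _ ⟨y, _, rfl⟩
    exact y.2
  have hSne : S.Nonempty := ⟨0, mem_insert _ _⟩
  obtain ⟨f, hf⟩ := Set.Countable.exists_eq_range hScount hSne
  have hfD : ∀ n, f n ∈ Dset d hd := fun n => hSsub (hf ▸ mem_range_self n)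
  have hSdense : ∀ x ∈ Dset d hd, ∀ ε > 0, ∃ n : ℕ, dist x (f n) < ε := by
    intro x hx ε hε
    obtain ⟨y, hyball, hyu⟩ := Metric.dense_iff.1 hudense ⟨x, hx⟩ ε hε
    have : (y : Euc d) ∈ S := mem_insert_of_mem _ (mem_image_of_mem _ hyu)
    rw [hf] at this
    obtain ⟨n, hn⟩ := this
    refine ⟨n, ?_⟩
    rw [hn]
    have := mem_ball.1 hyball
    rw [Subtype.dist_eq] at this
    rw [dist_comm]
    exact this
  refine ⟨fun F => insert (0 : Euc d) (f '' ↑F), ?_, ?_⟩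
  · intro F
    refine ⟨⟨0, mem_insert _ _⟩, ?_, mem_insert _ _, ?_⟩
    · exact ((F.finite_toSet.image f).insert _).isCompact
    · apply insert_subset (zero_mem_Dset hd)
      rintro _ ⟨n, _, rfl⟩
      exact hfD n
  · intro C hC ε hε
    obtain ⟨hCne, hCcomp, hC0, hCD⟩ := hC
    have hcov : C ⊆ ⋃ n : ℕ, ball (f n) (ε/2) := by
      intro y hy
      obtain ⟨n, hn⟩ := hSdense y (hCD hy) (ε/2) (by linarith)
      exact mem_iUnion.2 ⟨n, mem_ball'.2 (by rwa [dist_comm] )⟩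
    obtain ⟨F0, hF0⟩ := hCcomp.elim_finite_subcover (fun n : ℕ => ball (f n) (ε/2))
      (fun n => isOpen_ball) hcov
    set F := F0.filter (fun n => ∃ y ∈ C, dist y (f n) < ε/2) with hF
    refine ⟨F, ?_⟩
    have hε2 : (0:ℝ) ≤ ε/2 := by linarith
    have hmain : hausdorffDist (insert (0:Euc d) (f '' ↑F)) C ≤ ε/2 := by
      refine hausdorffDist_le_of_mem_dist hε2 ?_ ?_
      · intro w hw
        rcases hw with rfl | hw
        · exact ⟨0, hC0, by simpa using hε2⟩
        · obtain ⟨n, hn, rfl⟩ := hw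
          rw [hF] at hn
          obtain ⟨y, hy, hyd⟩ := (Finset.mem_filter.1 hn).2
          exact ⟨y, hy, by rw [dist_comm]; exact hyd.le⟩
      · intro y hy
        have := hF0 hy
        simp only [mem_iUnion, exists_prop] at this
        obtain ⟨n, hnF0, hnball⟩ := this
        have hyd : dist y (f n) < ε/2 := mem_ball.1 hnball
        have hnF : n ∈ F := Finset.mem_filter.2 ⟨hnF0, ⟨y, hy, hyd⟩⟩
        exact ⟨f n, mem_insert_of_mem _ (mem_image_of_mem _ hnF), hyd.le⟩
    linarith [hmain]

/-! ### the two directions of ApproxColl -/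

lemma subcoll_tangents_K (A : Set (Euc d)) (x : Euc d) :
    SubColl d (Tangents d A x) (KColl d) := by
  refine ⟨1/2, by norm_num, ?_⟩
  intro F hF
  have hFK : IsKSet d F := hF.1
  obtain ⟨a, ha⟩ := hFK.1
  refine ⟨F, hFK, 1, by norm_num, by norm_num, a, ha, a, ha, ?_⟩
  have : (fun y : Euc d => (1:ℝ) • (y - a)) = fun y => y - a := by
    funext y; rw [one_smul]
  rw [this]

lemma subcoll_K_tangents (hd : 0 < d) (A : Set (Euc d)) (x : Euc d)
    (Hrich : ∀ C ∈ Dcoll d hd, ∃ b ∈ C, ((fun y => y - b) '' C) ∈ Tangents d A x) :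
    SubColl d (KColl d) (Tangents d A x) := by
  refine ⟨(16:ℝ)⁻¹, by norm_num, ?_⟩
  intro B hB
  obtain ⟨hBne, hBcomp, hBcube⟩ := hB
  obtain ⟨a, haB, hamin⟩ := hBcomp.exists_isMinOn hBne
    ((EuclideanSpace.proj (𝕜 := ℝ) (⟨0, hd⟩ : Fin d)).continuous.continuousOn)
  set C := (fun y => (8:ℝ)⁻¹ • (y - a)) '' B with hC
  have h0C : (0 : Euc d) ∈ C := ⟨a, haB, by simp⟩
  have hCD : C ∈ Dcoll d hd := by
    refine ⟨hBne.image _, hBcomp.image (by fun_prop), h0C, ?_⟩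
    rintro w ⟨y, hy, rfl⟩
    constructor
    · show 0 ≤ ((8:ℝ)⁻¹ • (y - a)) ⟨0, hd⟩
      rw [PiLp.smul_apply, PiLp.sub_apply, smul_eq_mul]
      have : a ⟨0, hd⟩ ≤ y ⟨0, hd⟩ := hamin hy
      have h2 : (0:ℝ) ≤ y ⟨0, hd⟩ - a ⟨0, hd⟩ := sub_nonneg.2 this
      exact mul_nonneg (by norm_num) h2
    · intro i
      show |((8:ℝ)⁻¹ • (y - a)) i| ≤ 4⁻¹
      rw [PiLp.smul_apply, PiLp.sub_apply, smul_eq_mul, abs_mul, abs_of_pos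
        (by norm_num : (0:ℝ) < (8:ℝ)⁻¹)]
      have h1 : |y i| ≤ 1 := mem_cube.1 (hBcube hy) i
      have h2 : |a i| ≤ 1 := mem_cube.1 (hBcube haB) i
      have : |y i - a i| ≤ 2 := by
        calc |y i - a i| ≤ |y i| + |a i| := abs_sub _ _
          _ ≤ 2 := by linarith
      linarith
  obtain ⟨b, hbC, hTan⟩ := Hrich C hCD
  refine ⟨(fun y => y - b) '' C, hTan, (8:ℝ)⁻¹, by norm_num, by norm_num,
    a, haB, (0:Euc d) - b, mem_image_of_mem _ h0C, ?_⟩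
  show C = (fun y => y - ((0:Euc d) - b)) '' ((fun y => y - b) '' C)
  rw [image_image]
  have h : ∀ y : Euc d, y - b - (0 - b) = y := fun y => by abel
  simp only [h, image_id']



end Aux

/-- A typical compact subset of `Q` is locally rich: in the space of nonempty compact
subsets of `Q` with the Hausdorff metric, the collection of sets that are not locally
rich is meagre. -/
theorem typical_compact_set_locally_rich (d : ℕ) (hd : 0 < d) :
    IsMeagre {K : {K : TopologicalSpace.NonemptyCompacts (Euc d) // (K : Set (Euc d)) ⊆ cube d} |
      ¬ LocallyRich d (K.1 : Set (Euc d))} := by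
  classical
  obtain ⟨Cand, hCandD, hCanddense⟩ := exists_dense_family (d := d) hd
  set X := {K : TopologicalSpace.NonemptyCompacts (Euc d) // (K : Set (Euc d)) ⊆ cube d}
    with hX
  have hIsK : ∀ E : X, IsKSet d (E.1 : Set (Euc d)) :=
    fun E => ⟨E.1.nonempty, E.1.isCompact, E.2⟩
  set G : Finset ℕ × ℕ → Set X := fun Fm =>
    {E | ∃ t : ℝ, 0 < t ∧ t < ((Fm.2 : ℝ) + 1)⁻¹ ∧
      ∀ x ∈ (E.1 : Set (Euc d)), ∃ c ∈ Cand Fm.1,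
        hausdorffDist (zoom d x t (E.1 : Set (Euc d))) ((fun y => y - c) '' (Cand Fm.1))
          < ((Fm.2 : ℝ) + 1)⁻¹} with hG
  have hdense : ∀ i, Dense (interior (G i)) := by
    rintro ⟨F, m⟩
    rw [Metric.dense_iff]
    intro E δ hδ
    obtain ⟨E', hE'K, hE'dist, ε, t, hε0, ht0, htm, hstab⟩ :=
      density_key hd (hCandD F) m (hIsK E) hδ
    set E'x : X := ⟨⟨⟨E', hE'K.2.1⟩, hE'K.1⟩, hE'K.2.2⟩ with hE'x
    refine ⟨E'x, mem_inter ?_ ?_⟩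
    · rw [mem_ball]
      rw [Subtype.dist_eq, Metric.NonemptyCompacts.dist_eq]
      exact hE'dist
    · rw [mem_interior_iff_mem_nhds]
      rw [Metric.mem_nhds_iff]
      refine ⟨ε, hε0, ?_⟩
      intro E'' hE''
      rw [mem_ball, Subtype.dist_eq, Metric.NonemptyCompacts.dist_eq] at hE''
      refine ⟨t, ht0, htm, ?_⟩
      exact hstab (E''.1 : Set (Euc d)) (hIsK E'') hE''
  have hres : (⋂ i, interior (G i)) ∈ residual X :=
    countable_iInter_mem.2 fun i => residual_of_dense_open isOpen_interior (hdense i)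
  rw [IsMeagre]
  apply Filter.mem_of_superset hres
  intro E hE
  simp only [mem_compl_iff, mem_setOf_eq, not_not]
  refine fun hE' => hE' ?_
  intro x hx
  constructor
  · exact subcoll_tangents_K _ _
  · apply subcoll_K_tangents hd _ x
    intro C hC
    have htl := tangent_limit hd (hIsK E) hx hC ?_
    · obtain ⟨b, hbC, hb⟩ := htl
      exact ⟨b, hbC, hb⟩
    · intro j
      obtain ⟨F, hF⟩ := hCanddense C hC (((j : ℝ) + 1)⁻¹) (by positivity)
      have hEG : E ∈ G (F, j) := interior_subset (mem_iInter.1 hE (F, j))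
      obtain ⟨t, ht0, htlt, hall⟩ := hEG
      obtain ⟨c, hc, hzd⟩ := hall x hx
      exact ⟨Cand F, hCandD F, hF, t, ht0, htlt, c, hc, hzd⟩


end
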